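/- arXiv:2512.04924 — 4 statements merged into one kernel-verified Lean document; each statement's English description precedes it below -/
import Mathlib

section
/- Let (Ω, P) be a probability space, let X, Y : Ω → Fin n_b be measurable, and let W : Ω → ℝ be square-integrable. Suppose P(X = i ∧ Y = j) = π_i·P̃_{ij} for all i, j, that E[W·1_{X=i, Y=j}] = M_{ij}·π_i·P̃_{ij}, and that E[W²·1_{X=i, Y=j}] = (M_{ij}² + Σ_{ij})·π_i·P̃_{ij} for all i, j, where M and Σ are real matrices. Then Var[W] = π ((P̃ ⊙ M ⊙ M) + (P̃ ⊙ Σ)) 𝟙 − (π (P̃ ⊙ M) 𝟙)². -/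
open MeasureTheory ProbabilityTheory Matrix

/-! Split `Ω` into the cells `{X = i ∧ Y = j}`. On each cell the hypotheses give the first and
second moments of `W`, so summing over the cells expresses `E[W]` and `E[W²]` as `π A 𝟙` for
`A = P̃ ⊙ M` and `A = P̃ ⊙ M ⊙ M + P̃ ⊙ Σ`; then `Var[W] = E[W²] - E[W]²`. -/

section

variable {Ω E : Type*} [MeasurableSpace Ω] {μ : Measure Ω}
  [NormedAddCommGroup E] [NormedSpace ℝ E]

theorem integral_eq_sum_setIntegral_fiber {α : Type*} [Fintype α] [MeasurableSpace α]
    [MeasurableSingletonClass α] {Z : Ω → α} (hZ : Measurable Z) {f : Ω → E}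
    (hf : Integrable f μ) :
    ∫ ω, f ω ∂μ = ∑ a, ∫ ω in Z ⁻¹' {a}, f ω ∂μ := by
  rw [← setIntegral_univ, ← Set.preimage_univ (f := Z), ← Set.iUnion_of_singleton,
    Set.preimage_iUnion, integral_iUnion_fintype (fun a => hZ (measurableSet_singleton a))
      (pairwise_disjoint_fiber Z) fun _ => hf.integrableOn]

theorem integral_eq_sum_setIntegral_joint_fiber {ι κ : Type*} [Fintype ι] [Fintype κ]
    [MeasurableSpace ι] [MeasurableSpace κ] [MeasurableSingletonClass ι]
    [MeasurableSingletonClass κ] {X : Ω → ι} {Y : Ω → κ} (hX : Measurable X)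
    (hY : Measurable Y) {f : Ω → E} (hf : Integrable f μ) :
    ∫ ω, f ω ∂μ = ∑ i, ∑ j, ∫ ω in {ω | X ω = i ∧ Y ω = j}, f ω ∂μ := by
  rw [integral_eq_sum_setIntegral_fiber (hX.prodMk hY) hf, Fintype.sum_prod_type]
  simp only [Set.preimage, Set.mem_singleton_iff, Prod.ext_iff]

end

theorem dotProduct_mulVec_const_one {m n R : Type*} [Fintype m] [Fintype n]
    [NonAssocSemiring R] (π : m → R) (A : Matrix m n R) :
    π ⬝ᵥ A *ᵥ (fun _ => 1) = ∑ i, ∑ j, π i * A i j := by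
  simp [dotProduct, mulVec, Finset.mul_sum]

theorem integral_eq_dotProduct_mulVec_const_one {Ω ι : Type*} [MeasurableSpace Ω]
    {μ : Measure Ω} [Fintype ι] [MeasurableSpace ι] [MeasurableSingletonClass ι]
    {X Y : Ω → ι} (hX : Measurable X) (hY : Measurable Y) {g : Ω → ℝ} (hg : Integrable g μ)
    {π : ι → ℝ} {A : Matrix ι ι ℝ}
    (hcell : ∀ i j, ∫ ω in {ω | X ω = i ∧ Y ω = j}, g ω ∂μ = π i * A i j) :
    ∫ ω, g ω ∂μ = π ⬝ᵥ A *ᵥ (fun _ => 1) := by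
  simp only [integral_eq_sum_setIntegral_joint_fiber hX hY hg, hcell,
    dotProduct_mulVec_const_one]

theorem steady_state_variance_holding_times_general
    {Ω : Type*} [MeasurableSpace Ω] (P : Measure Ω) [IsProbabilityMeasure P]
    {n_b : ℕ}
    (X Y : Ω → Fin n_b) (hX : Measurable X) (hY : Measurable Y)
    (W : Ω → ℝ) (hW : MemLp W 2 P)
    (π : Fin n_b → ℝ) (Pt M Sig : Matrix (Fin n_b) (Fin n_b) ℝ)
    (hmean : ∀ i j, ∫ ω in {ω | X ω = i ∧ Y ω = j}, W ω ∂P = M i j * (π i * Pt i j))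
    (hsecond : ∀ i j,
      ∫ ω in {ω | X ω = i ∧ Y ω = j}, (W ω) ^ 2 ∂P = (M i j ^ 2 + Sig i j) * (π i * Pt i j)) :
    variance W P =
      π ⬝ᵥ ((Pt ⊙ M ⊙ M) + (Pt ⊙ Sig)).mulVec (fun _ => 1)
        - (π ⬝ᵥ (Pt ⊙ M).mulVec (fun _ => 1)) ^ 2 := by
  have hfirst_moment : ∫ ω, W ω ∂P = π ⬝ᵥ (Pt ⊙ M) *ᵥ (fun _ => 1) :=
    integral_eq_dotProduct_mulVec_const_one hX hY (hW.integrable one_le_two) fun i j => by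
      rw [hmean, hadamard_apply]; ring
  have hsecond_moment :
      ∫ ω, W ω ^ 2 ∂P = π ⬝ᵥ ((Pt ⊙ M ⊙ M) + (Pt ⊙ Sig)) *ᵥ (fun _ => 1) :=
    integral_eq_dotProduct_mulVec_const_one hX hY hW.integrable_sq fun i j => by
      rw [hsecond, Matrix.add_apply, hadamard_apply, hadamard_apply, hadamard_apply]; ring
  rw [variance_eq_sub hW]
  simp only [Pi.pow_apply]
  rw [hfirst_moment, hsecond_moment]

/-- **Theorem 3, Eq. (9) (steady-state variance of holding times).**
If the joint law of `(X, Y)` is `P(X = i ∧ Y = j) = π i * Pt i j`,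
`E[W · 1_{X=i, Y=j}] = M i j * π i * Pt i j`, and
`E[W² · 1_{X=i, Y=j}] = (M i j ² + Sig i j) * π i * Pt i j`, then
`Var[W] = π ((Pt ⊙ M ⊙ M) + (Pt ⊙ Σ)) 𝟙 − (π (Pt ⊙ M) 𝟙)²`. -/
theorem steady_state_variance_holding_times
    {Ω : Type*} [MeasurableSpace Ω] (P : Measure Ω) [IsProbabilityMeasure P]
    {n_b : ℕ} (hn : 0 < n_b)
    (X Y : Ω → Fin n_b) (hX : Measurable X) (hY : Measurable Y)
    (W : Ω → ℝ) (hW : MemLp W 2 P)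
    (π : Fin n_b → ℝ) (Pt M Sig : Matrix (Fin n_b) (Fin n_b) ℝ)
    (hjoint : ∀ i j, (P {ω | X ω = i ∧ Y ω = j}).toReal = π i * Pt i j)
    (hmean : ∀ i j, ∫ ω in {ω | X ω = i ∧ Y ω = j}, W ω ∂P = M i j * (π i * Pt i j))
    (hsecond : ∀ i j,
      ∫ ω in {ω | X ω = i ∧ Y ω = j}, (W ω) ^ 2 ∂P = (M i j ^ 2 + Sig i j) * (π i * Pt i j)) :
    variance W P =
      π ⬝ᵥ ((Pt ⊙ M ⊙ M) + (Pt ⊙ Sig)).mulVec (fun _ => 1)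
        - (π ⬝ᵥ (Pt ⊙ M).mulVec (fun _ => 1)) ^ 2 :=
  steady_state_variance_holding_times_general P X Y hX hY W hW π Pt M Sig hmean hsecond
end

section
/- Let π be a row vector and P̃, M real matrices indexed by Fin n_b, and set Q = P̃ ⊙ M. Then for every integer l ≥ 1, the sum over all paths (i_0, i_1, …, i_{l+1}) ∈ (Fin n_b)^{l+2} of π_{i_0}·(∏_{k=0}^{l} P̃_{i_k i_{k+1}})·M_{i_0 i_1}·M_{i_l i_{l+1}} equals π Q P̃^{l−1} Q 𝟙. -/
open Matrix
open scoped BigOperators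

private lemma sum_cons_aux {n_b k : ℕ} (f : (Fin (k + 1) → Fin n_b) → ℝ) :
    ∑ p : Fin (k + 1) → Fin n_b, f p
      = ∑ x : Fin n_b, ∑ q : Fin k → Fin n_b, f (Fin.cons x q) := by
  rw [← (Fin.consEquiv (fun _ : Fin (k + 1) => Fin n_b)).sum_comp, Fintype.sum_prod_type]
  rfl

private lemma path_sum_aux {n_b : ℕ} (Pt : Matrix (Fin n_b) (Fin n_b) ℝ) :
    ∀ (m : ℕ) (v : Fin n_b → ℝ) (w : Fin n_b → Fin n_b → ℝ),
    (∑ p : Fin (m + 2) → Fin n_b,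
        v (p 0) * (∏ k : Fin (m + 1), Pt (p k.castSucc) (p k.succ))
          * w (p (Fin.castSucc (Fin.last m))) (p (Fin.last (m + 1)))) =
      ∑ i, ∑ j, (v ᵥ* Pt ^ m) i * Pt i j * w i j := by
  intro m
  induction m with
  | zero =>
      intro v w
      rw [sum_cons_aux]
      simp only [pow_zero, Matrix.vecMul_one]
      refine Finset.sum_congr rfl fun x _ => ?_
      rw [sum_cons_aux]
      refine Finset.sum_congr rfl fun b _ => ?_
      rw [Fintype.sum_unique]
      have e0 : (Fin.cons x (Fin.cons b default) : Fin 2 → Fin n_b) 0 = x := rfl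
      have e1 : (Fin.cons x (Fin.cons b default) : Fin 2 → Fin n_b) ((0 : Fin 1).succ) = b := rfl
      rw [Fin.prod_univ_one]
      rw [show ((0 : Fin 1).castSucc : Fin 2) = 0 from rfl,
          show ((Fin.last 0).castSucc : Fin 2) = 0 from rfl,
          show (Fin.last 1 : Fin 2) = (0 : Fin 1).succ from rfl, e0, e1]
  | succ m ih =>
      intro v w
      rw [sum_cons_aux]
      have key : ∀ (x : Fin n_b) (q : Fin (m + 2) → Fin n_b),
          v ((Fin.cons x q : Fin (m+3) → Fin n_b) 0)
            * (∏ k : Fin (m + 2), Pt ((Fin.cons x q : Fin (m+3) → Fin n_b) k.castSucc)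
                ((Fin.cons x q : Fin (m+3) → Fin n_b) k.succ))
            * w ((Fin.cons x q : Fin (m+3) → Fin n_b) (Fin.castSucc (Fin.last (m+1))))
                ((Fin.cons x q : Fin (m+3) → Fin n_b) (Fin.last (m + 2)))
          = (v x * Pt x (q 0)) * (∏ k : Fin (m + 1), Pt (q k.castSucc) (q k.succ))
            * w (q (Fin.castSucc (Fin.last m))) (q (Fin.last (m + 1))) := by
        intro x q
        rw [Fin.prod_univ_succ]
        have hp : (∏ k : Fin (m+1), Pt ((Fin.cons x q : Fin (m+3) → Fin n_b) (k.succ).castSucc)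
            ((Fin.cons x q : Fin (m+3) → Fin n_b) (k.succ).succ))
            = ∏ k : Fin (m+1), Pt (q k.castSucc) (q k.succ) := by
          refine Finset.prod_congr rfl fun k _ => ?_
          rw [show ((k.succ).castSucc : Fin (m+3)) = Fin.succ k.castSucc by ext; simp,
              Fin.cons_succ, Fin.cons_succ]
        have h2 : (Fin.cons x q : Fin (m+3) → Fin n_b) (Fin.castSucc (Fin.last (m+1)))
            = q (Fin.castSucc (Fin.last m)) := by
          rw [show (Fin.castSucc (Fin.last (m+1)) : Fin (m+3)) = Fin.succ (Fin.castSucc (Fin.last m)) by ext; simp,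
              Fin.cons_succ]
        have h3 : (Fin.cons x q : Fin (m+3) → Fin n_b) (Fin.last (m+2)) = q (Fin.last (m+1)) := by
          rw [show (Fin.last (m+2) : Fin (m+3)) = Fin.succ (Fin.last (m+1)) by ext; simp,
              Fin.cons_succ]
        rw [hp, h2, h3, Fin.cons_zero,
            show (((0 : Fin (m+2)).castSucc : Fin (m+3))) = 0 from rfl, Fin.cons_zero,
            show (((0 : Fin (m+2)).succ : Fin (m+3))) = Fin.succ 0 from rfl, Fin.cons_succ]
        ring
      simp_rw [key]
      calc (∑ x, ∑ q : Fin (m + 2) → Fin n_b,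
            (v x * Pt x (q 0)) * (∏ k : Fin (m + 1), Pt (q k.castSucc) (q k.succ))
              * w (q (Fin.castSucc (Fin.last m))) (q (Fin.last (m + 1))))
          = ∑ x, ∑ i, ∑ j, ((fun j => v x * Pt x j) ᵥ* Pt ^ m) i * Pt i j * w i j :=
            Finset.sum_congr rfl (fun x _ => ih (fun j => v x * Pt x j) w)
        _ = ∑ i, ∑ j, (v ᵥ* Pt ^ (m + 1)) i * Pt i j * w i j := by
            rw [Finset.sum_comm]
            refine Finset.sum_congr rfl fun i _ => ?_
            rw [Finset.sum_comm]
            refine Finset.sum_congr rfl fun j _ => ?_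
            rw [← Finset.sum_mul, ← Finset.sum_mul]
            congr 2
            rw [pow_succ', ← vecMul_vecMul]
            simp only [vecMul, dotProduct, Finset.sum_mul, mul_assoc]
            rw [Finset.sum_comm]

/-- **Path-sum identity for the lag-`l` covariance (Theorem 3, Eq. (10)).**
For `Q = Pt ⊙ M`, the sum over all paths `(i_0, …, i_{l+1})` of
`π i_0 · (∏_{k=0}^{l} Pt i_k i_{k+1}) · M i_0 i_1 · M i_l i_{l+1}` equals
`π Q Pt^{l-1} Q 𝟙`. -/
theorem path_sum_lag_covariance
    {n_b : ℕ} (hn : 0 < n_b)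
    (π : Fin n_b → ℝ) (Pt M : Matrix (Fin n_b) (Fin n_b) ℝ)
    (l : ℕ) (hl : 1 ≤ l) :
    (∑ p : Fin (l + 2) → Fin n_b,
        π (p 0) * (∏ k : Fin (l + 1), Pt (p k.castSucc) (p k.succ))
          * M (p 0) (p 1)
          * M (p ⟨l, Nat.lt_succ_of_lt (Nat.lt_succ_self l)⟩) (p (Fin.last (l + 1)))) =
      π ⬝ᵥ ((Pt ⊙ M) * Pt ^ (l - 1) * (Pt ⊙ M)).mulVec (fun _ => 1) := by
  obtain ⟨m, rfl⟩ : ∃ m, l = m + 1 := ⟨l - 1, by omega⟩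
  rw [sum_cons_aux]
  have key : ∀ (x : Fin n_b) (q : Fin (m + 2) → Fin n_b),
      π ((Fin.cons x q : Fin (m+3) → Fin n_b) 0)
        * (∏ k : Fin (m + 2), Pt ((Fin.cons x q : Fin (m+3) → Fin n_b) k.castSucc)
            ((Fin.cons x q : Fin (m+3) → Fin n_b) k.succ))
        * M ((Fin.cons x q : Fin (m+3) → Fin n_b) 0) ((Fin.cons x q : Fin (m+3) → Fin n_b) 1)
        * M ((Fin.cons x q : Fin (m+3) → Fin n_b) ⟨m+1, Nat.lt_succ_of_lt (Nat.lt_succ_self (m+1))⟩)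
            ((Fin.cons x q : Fin (m+3) → Fin n_b) (Fin.last (m + 2)))
      = (π x * Pt x (q 0) * M x (q 0)) * (∏ k : Fin (m + 1), Pt (q k.castSucc) (q k.succ))
        * M (q (Fin.castSucc (Fin.last m))) (q (Fin.last (m + 1))) := by
    intro x q
    rw [Fin.prod_univ_succ]
    have hp : (∏ k : Fin (m+1), Pt ((Fin.cons x q : Fin (m+3) → Fin n_b) (k.succ).castSucc)
        ((Fin.cons x q : Fin (m+3) → Fin n_b) (k.succ).succ))
        = ∏ k : Fin (m+1), Pt (q k.castSucc) (q k.succ) := by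
      refine Finset.prod_congr rfl fun k _ => ?_
      rw [show ((k.succ).castSucc : Fin (m+3)) = Fin.succ k.castSucc by ext; simp,
          Fin.cons_succ, Fin.cons_succ]
    have h2 : (Fin.cons x q : Fin (m+3) → Fin n_b) ⟨m+1, Nat.lt_succ_of_lt (Nat.lt_succ_self (m+1))⟩
        = q (Fin.castSucc (Fin.last m)) := by
      rw [show ((⟨m+1, Nat.lt_succ_of_lt (Nat.lt_succ_self (m+1))⟩ : Fin (m+3)))
            = Fin.succ (Fin.castSucc (Fin.last m)) by ext; simp,
          Fin.cons_succ]
    have h3 : (Fin.cons x q : Fin (m+3) → Fin n_b) (Fin.last (m+2)) = q (Fin.last (m+1)) := by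
      rw [show (Fin.last (m+2) : Fin (m+3)) = Fin.succ (Fin.last (m+1)) by ext; simp,
          Fin.cons_succ]
    have h4 : (Fin.cons x q : Fin (m+3) → Fin n_b) 1 = q 0 := by
      rw [show (1 : Fin (m+3)) = Fin.succ 0 from rfl, Fin.cons_succ]
    rw [hp, h2, h3, h4, Fin.cons_zero,
        show (((0 : Fin (m+2)).castSucc : Fin (m+3))) = 0 from rfl, Fin.cons_zero,
        show (((0 : Fin (m+2)).succ : Fin (m+3))) = Fin.succ 0 from rfl, Fin.cons_succ]
    ring
  simp_rw [key]
  have step : ∀ x : Fin n_b,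
      (∑ q : Fin (m + 2) → Fin n_b,
        (π x * Pt x (q 0) * M x (q 0)) * (∏ k : Fin (m + 1), Pt (q k.castSucc) (q k.succ))
          * M (q (Fin.castSucc (Fin.last m))) (q (Fin.last (m + 1))))
      = ∑ i, ∑ j, ((fun j => π x * Pt x j * M x j) ᵥ* Pt ^ m) i * Pt i j * M i j :=
    fun x => path_sum_aux Pt m (fun j => π x * Pt x j * M x j) (fun i j => M i j)
  simp_rw [step]
  simp only [dotProduct, mulVec, Matrix.mul_apply, hadamard_apply, vecMul,
    Nat.add_sub_cancel, dotProduct, Finset.sum_mul, Finset.mul_sum, mul_one]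
  refine Finset.sum_congr rfl fun x _ => ?_
  rw [Finset.sum_comm]
  refine Finset.sum_congr rfl fun i _ => ?_
  refine Finset.sum_congr rfl fun j _ => ?_
  exact Finset.sum_congr rfl fun a _ => by ring
end

section
/- Let P̃, V, U, Q be complex square matrices indexed by Fin M with P̃ = V Λ Uᴴ, where Λ is the diagonal matrix with diagonal entries λ_1, …, λ_M, Uᴴ V = I, λ_1 = 1, the first column of V is the all-ones vector, the first row of Uᴴ is the row vector π, and |λ_m| < 1 for all m ≥ 2. Set μ = π Q 𝟙, α = π Q V, β = Uᴴ Q 𝟙, and γ_l = π Q P̃^{l−1} Q 𝟙 − μ² for l ≥ 1. Then the series Σ_{l=1}^∞ γ_l converges, with sum Σ_{m=2}^{M} α_m β_m / (1 − λ_m). -/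
/-!
Diagonalising `Pt = V Λ Uᴴ` with `Uᴴ V = 1` gives `Pt ^ l = V Λ^l Uᴴ`, so the `l`-th correlation
`π Q Pt^l Q 𝟙` is the finite sum `∑ₘ αₘ λₘ^l βₘ`. Because the first column of `V` is `𝟙` and the
first row of `Uᴴ` is `π`, the mode `m = 0` (where `λ₀ = 1`) contributes exactly `α₀ β₀ = μ²`; the
remaining modes are geometric series with ratio `|λₘ| < 1`, summing to `αₘ βₘ / (1 - λₘ)`.
-/

open Matrix

theorem Matrix.dotProduct_mul_diagonal_mul_mulVec {n R : Type*} [Fintype n] [DecidableEq n]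
    [CommSemiring R] (u v d : n → R) (A B : Matrix n n R) :
    u ⬝ᵥ (A * diagonal d * B) *ᵥ v = ∑ m, (u ᵥ* A) m * d m * (B *ᵥ v) m := by
  rw [dotProduct_mulVec, ← vecMul_vecMul, ← vecMul_vecMul, ← dotProduct_mulVec]
  simp only [dotProduct, vecMul_diagonal]

theorem hasSum_sum_mul_pow_mul {ι 𝕜 : Type*} [NormedField 𝕜] [CompleteSpace 𝕜]
    (s : Finset ι) (a b d : ι → 𝕜) (hd : ∀ m ∈ s, ‖d m‖ < 1) :
    HasSum (fun l : ℕ => ∑ m ∈ s, a m * d m ^ l * b m) (∑ m ∈ s, a m * b m / (1 - d m)) := by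
  refine hasSum_sum fun m hm => ?_
  rw [mul_div_right_comm, div_eq_mul_inv]
  exact ((hasSum_geometric_of_norm_lt_one (hd m hm)).mul_left (a m)).mul_right (b m)

/-- **Closed-form steady-state covariance (Eq. (21)).**
Under the spectral decomposition `Pt = V Λ Uᴴ` with leading eigentriple `(1, 𝟙, π)`
and all other eigenvalues strictly inside the unit disc, the series
`∑_{l=1}^∞ γ_l` with `γ_l = π Q Pt^{l-1} Q 𝟙 − μ²` converges to
`∑_{m=2}^{M} α_m β_m / (1 − λ_m)`. -/
theorem steady_state_covariance_sum
    {M : ℕ} [NeZero M]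
    (Pt V U Q : Matrix (Fin M) (Fin M) ℂ) (lam : Fin M → ℂ) (π : Fin M → ℂ)
    (hdecomp : Pt = V * Matrix.diagonal lam * Uᴴ)
    (hbiorth : Uᴴ * V = 1)
    (hlam1 : lam 0 = 1)
    (hV1 : ∀ i, V i 0 = 1)
    (hU1 : ∀ j, Uᴴ 0 j = π j)
    (hsub : ∀ m : Fin M, m ≠ 0 → ‖lam m‖ < 1)
    (μ : ℂ) (hμ : μ = π ⬝ᵥ Q.mulVec (fun _ => 1))
    (α : Fin M → ℂ) (hα : α = Matrix.vecMul (Matrix.vecMul π Q) V)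
    (β : Fin M → ℂ) (hβ : β = Matrix.mulVec (Uᴴ * Q) (fun _ => 1)) :
    HasSum
      (fun l : ℕ => π ⬝ᵥ (Q * Pt ^ l * Q).mulVec (fun _ => 1) - μ ^ 2)
      (∑ m ∈ Finset.univ.erase (0 : Fin M), α m * β m / (1 - lam m)) := by
  let VUnit : (Matrix (Fin M) (Fin M) ℂ)ˣ := ⟨V, Uᴴ, mul_eq_one_comm.mp hbiorth, hbiorth⟩
  have hpow (l : ℕ) : Pt ^ l = V * diagonal (lam ^ l) * Uᴴ := by
    rw [hdecomp, ← diagonal_pow]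
    exact Units.conj_pow VUnit _ l
  have hα0 : α 0 = μ := by
    rw [hα, hμ, dotProduct_mulVec, ← funext hV1]
    rfl
  have hβ0 : β 0 = μ := by
    rw [hβ, hμ, ← mulVec_mulVec, ← funext hU1]
    rfl
  have hmodes (l : ℕ) : π ⬝ᵥ (Q * Pt ^ l * Q) *ᵥ (fun _ => 1) = ∑ m, α m * lam m ^ l * β m := by
    rw [hpow, show Q * (V * diagonal (lam ^ l) * Uᴴ) * Q = (Q * V) * diagonal (lam ^ l) * (Uᴴ * Q)
      by simp only [Matrix.mul_assoc], dotProduct_mul_diagonal_mul_mulVec, hα, hβ, vecMul_vecMul]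
    rfl
  have hterm (l : ℕ) : π ⬝ᵥ (Q * Pt ^ l * Q) *ᵥ (fun _ => 1) - μ ^ 2
      = ∑ m ∈ Finset.univ.erase 0, α m * lam m ^ l * β m := by
    rw [hmodes, ← Finset.add_sum_erase _ _ (Finset.mem_univ 0), hlam1, hα0, hβ0]
    ring
  simp only [hterm]
  exact hasSum_sum_mul_pow_mul _ _ _ _ fun m hm => hsub m (Finset.ne_of_mem_erase hm)
end

section
/- Let P̃, V, U, Q be complex square matrices indexed by Fin M with P̃ = V Λ Uᴴ, where Λ is the diagonal matrix with diagonal entries λ_1, …, λ_M, Uᴴ V = I, λ_1 = 1, the first column of V is the all-ones vector, the first row of Uᴴ is the row vector π, and |λ_m| < 1 for all m ≥ 2. Set μ = π Q 𝟙, α = π Q V, β = Uᴴ Q 𝟙, and γ_l = π Q P̃^{l−1} Q 𝟙 − μ² for l ≥ 1. Then for every L ∈ ℕ, the tail series Σ_{l=L+1}^∞ γ_l converges with sum Σ_{m=2}^{M} α_m β_m λ_m^{L} / (1 − λ_m); equivalently, Σ_{l=1}^∞ γ_l = Σ_{l=1}^{L} γ_l + Σ_{m=2}^{M} α_m β_m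 λ_m^{L} / (1 − λ_m). -/
open Matrix
open scoped BigOperators

/-! Since `Uᴴ V = 1`, powers of `P̃` diagonalise as `P̃ⁿ = V Λⁿ Uᴴ`, so
`π Q P̃ⁿ Q 𝟙 = ∑ₘ αₘ βₘ λₘⁿ`. The leading term is `α₁ β₁ = μ²` (the first column of `V` is `𝟙`
and the first row of `Uᴴ` is `π`) and cancels against `μ²`, leaving finitely many geometric
sequences of ratio `|λₘ| < 1`, whose tails from `L` sum to `αₘ βₘ λₘᴸ / (1 − λₘ)`. -/

namespace Matrix

variable {n R : Type*} [Fintype n] [DecidableEq n]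

theorem mul_diagonal_mul_pow_of_mul_eq_one [CommRing R] {V W : Matrix n n R} (hWV : W * V = 1)
    (d : n → R) (k : ℕ) : (V * diagonal d * W) ^ k = V * diagonal (d ^ k) * W := by
  let u : (Matrix n n R)ˣ := ⟨V, W, mul_eq_one_comm.mp hWV, hWV⟩
  exact (u.conj_pow (diagonal d) k).trans (by rw [diagonal_pow]; rfl)

theorem dotProduct_mul_diagonal_mul_mulVec_s8 [CommSemiring R] (x y d : n → R) (A B : Matrix n n R) :
    x ⬝ᵥ (A * diagonal d * B) *ᵥ y = ∑ i, (x ᵥ* A) i * (B *ᵥ y) i * d i := by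
  rw [← mulVec_mulVec, ← mulVec_mulVec, dotProduct_mulVec, dotProduct_mulVec]
  simp only [dotProduct, vecMul_diagonal, mul_right_comm _ (d _)]

end Matrix

theorem hasSum_sum_mul_pow_add {𝕜 ι : Type*} [NormedDivisionRing 𝕜] [CompleteSpace 𝕜]
    (s : Finset ι) (c r : ι → 𝕜) (hr : ∀ i ∈ s, ‖r i‖ < 1) (L : ℕ) :
    HasSum (fun l => ∑ i ∈ s, c i * r i ^ (L + l)) (∑ i ∈ s, c i * r i ^ L * (1 - r i)⁻¹) := by
  refine hasSum_sum fun i hi => ?_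
  simpa only [pow_add, mul_assoc] using
    (hasSum_geometric_of_norm_lt_one (hr i hi)).mul_left (c i * r i ^ L)

/-- **Proposition 1 (spectral truncation rule), exact full-rank form.**
Under the spectral decomposition of `Pt` with leading eigentriple `(1, 𝟙, π)` and
subdominant eigenvalues strictly inside the unit disc, for every `L` the tail series
`∑_{l=L+1}^∞ γ_l` converges to `∑_{m=2}^{M} α_m β_m λ_m^L / (1 − λ_m)`, where
`γ_l = π Q Pt^{l-1} Q 𝟙 − μ²`; equivalently,
`∑_{l=1}^∞ γ_l = ∑_{l=1}^{L} γ_l + ∑_{m=2}^{M} α_m β_m λ_m^L / (1 − λ_m)`. -/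
theorem spectral_truncation_rule
    {M : ℕ} [NeZero M]
    (Pt V U Q : Matrix (Fin M) (Fin M) ℂ) (lam : Fin M → ℂ) (π : Fin M → ℂ)
    (hdecomp : Pt = V * Matrix.diagonal lam * Uᴴ)
    (hbiorth : Uᴴ * V = 1)
    (hlam1 : lam 0 = 1)
    (hV1 : ∀ i, V i 0 = 1)
    (hU1 : ∀ j, Uᴴ 0 j = π j)
    (hsub : ∀ m : Fin M, m ≠ 0 → ‖lam m‖ < 1)
    (μ : ℂ) (hμ : μ = π ⬝ᵥ Q.mulVec (fun _ => 1))
    (α : Fin M → ℂ) (hα : α = Matrix.vecMul (Matrix.vecMul π Q) V)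
    (β : Fin M → ℂ) (hβ : β = Matrix.mulVec (Uᴴ * Q) (fun _ => 1))
    (L : ℕ) :
    HasSum
      (fun l : ℕ => π ⬝ᵥ (Q * Pt ^ (L + l) * Q).mulVec (fun _ => 1) - μ ^ 2)
      (∑ m ∈ Finset.univ.erase (0 : Fin M), α m * β m * lam m ^ L / (1 - lam m)) ∧
    (∑' l : ℕ, (π ⬝ᵥ (Q * Pt ^ l * Q).mulVec (fun _ => 1) - μ ^ 2)) =
      (∑ l ∈ Finset.range L, (π ⬝ᵥ (Q * Pt ^ l * Q).mulVec (fun _ => 1) - μ ^ 2)) +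
        ∑ m ∈ Finset.univ.erase (0 : Fin M), α m * β m * lam m ^ L / (1 - lam m) := by
  set γ : ℕ → ℂ := fun l => π ⬝ᵥ (Q * Pt ^ l * Q).mulVec (fun _ => 1) - μ ^ 2
  have hα0 : α 0 = μ := by
    rw [hα, hμ, dotProduct_mulVec]
    change (π ᵥ* Q) ⬝ᵥ (fun i => V i 0) = _
    simp only [hV1]
  have hβ0 : β 0 = μ := by
    rw [hβ, hμ, ← mulVec_mulVec]
    exact congrArg (· ⬝ᵥ _) (funext hU1)
  have hγ : ∀ n, γ n = ∑ m ∈ Finset.univ.erase 0, α m * β m * lam m ^ n := by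
    intro n
    have hspec : Q * Pt ^ n * Q = (Q * V) * diagonal (lam ^ n) * (Uᴴ * Q) := by
      rw [hdecomp, mul_diagonal_mul_pow_of_mul_eq_one hbiorth]
      simp only [Matrix.mul_assoc]
    dsimp only [γ]
    rw [hspec, dotProduct_mul_diagonal_mul_mulVec_s8, ← vecMul_vecMul,
      ← hα, ← hβ, ← Finset.add_sum_erase _ _ (Finset.mem_univ 0)]
    simp only [Pi.pow_apply, hα0, hβ0, hlam1, one_pow]
    ring
  have htail : ∀ K, HasSum (fun l => γ (K + l))
      (∑ m ∈ Finset.univ.erase 0, α m * β m * lam m ^ K / (1 - lam m)) := fun K => by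
    simpa only [hγ, div_eq_mul_inv] using hasSum_sum_mul_pow_add _ (fun m => α m * β m) lam
      (fun m hm => hsub m (Finset.ne_of_mem_erase hm)) K
  refine ⟨htail L, ?_⟩
  have hsum : Summable γ := by simpa only [zero_add] using (htail 0).summable
  rw [← hsum.sum_add_tsum_nat_add L, ← (htail L).tsum_eq]
  simp_rw [add_comm _ L]
end
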